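/- arXiv:1406.7198 — 2 statements merged into one kernel-verified Lean document; each statement's English description precedes it below -/
import Mathlib

section
/- Let G be a finite connected multigraph without self-loops on vertex set V, with graph lattice Λ(G) = ℤ^V/ℤ[V]. Then the following are equivalent: (i) G is 2-connected, i.e. for every vertex v ∈ V the sub-multigraph induced on V∖{v} is connected; (ii) for every vertex v ∈ V, the class of [v] in Λ(G) is irreducible; (iii) Λ(G) is indecomposable. -/
/-- The bilinear form of the multigraph with edge multiplicities `ε`:
`x·y = Σ_v d(v) x_v y_v − Σ_{v≠w} ε(v,w) x_v y_w`, where `d(v) = Σ_w ε(v,w)`. -/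
def gform {V : Type*} [Fintype V] [DecidableEq V] (ε : V → V → ℕ) (x y : V → ℤ) : ℤ :=
  (∑ v, (∑ w, (ε v w : ℤ)) * (x v * y v)) -
    ∑ v, ∑ w ∈ Finset.univ.filter (· ≠ v), (ε v w : ℤ) * (x v * y w)

/-- The simple graph underlying the multigraph with edge multiplicities `ε`. -/
def gGraph {V : Type*} (ε : V → V → ℕ) : SimpleGraph V :=
  SimpleGraph.fromRel (fun v w => 0 < ε v w)

/-- Connectivity of the sub-multigraph induced on the set `S`. -/
def gConnOn {V : Type*} (ε : V → V → ℕ) (S : Set V) : Prop :=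
  (SimpleGraph.fromRel (fun v w : S => 0 < ε v.1 w.1)).Connected

/-- `ℤ[V]`, the span of the all-ones vector `[V]` in `ℤ^V`. -/
def onesSub (V : Type*) : Submodule ℤ (V → ℤ) :=
  Submodule.span ℤ ({fun _ => (1 : ℤ)} : Set (V → ℤ))

/-- The characteristic vector `[R] ∈ ℤ^V` of a finite set of vertices. -/
def chiF {V : Type*} [DecidableEq V] (R : Finset V) : V → ℤ :=
  fun v => if v ∈ R then 1 else 0

/-- Irreducibility, in the graph lattice `Λ(G) = ℤ^V/ℤ[V]`, of the class of
`z : ℤ^V`, stated on representatives: the class of `z` cannot be written as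
`x + y` with `x, y` nonzero classes and `x·y ≥ 0`. -/
def gIrredRep {V : Type*} [Fintype V] [DecidableEq V] (ε : V → V → ℕ) (z : V → ℤ) : Prop :=
  ¬ ∃ x y : V → ℤ, x ∉ onesSub V ∧ y ∉ onesSub V ∧
      z - (x + y) ∈ onesSub V ∧ 0 ≤ gform ε x y

/-!
By the Dirichlet formula `2 x·y = Σ_{v,w} ε(v,w) (x_v - x_w) (y_v - y_w)`, if `[a] ≡ x + y` with
`x·y ≥ 0`, then across every edge the increment `t` of `x` satisfies `t (s - t) = 0`, where
`s ∈ {-1, 0, 1}` is the increment of `[a]`. Hence `x` is constant on `G - a` when that graph is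
connected, and jumps by `0` or `1` at `a`, so `x` or `y` vanishes in `Λ(G)`: (i) ⇒ (ii).
An irreducible `[v]` lies in one summand of an orthogonal splitting, and adjacent vertices lie in
the same summand since `[p]·[q] = -ε(p,q) < 0`; by connectivity one summand contains every `[v]`,
hence all of `Λ(G)`: (ii) ⇒ (iii). Finally a cut vertex `a` separating `A` from `B` splits `Λ(G)`
into the classes of vectors supported on `A` and on `B`: (iii) ⇒ (i).
-/

open Finset

/-- A witness that `Λ(G)` is decomposable, with orthogonality read on representatives. -/
def IsOrthogonalSplitting {V : Type*} [Fintype V] [DecidableEq V] (ε : V → V → ℕ)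
    (L₁ L₂ : Submodule ℤ ((V → ℤ) ⧸ onesSub V)) : Prop :=
  L₁ ≠ ⊥ ∧ L₂ ≠ ⊥ ∧ L₁ ⊓ L₂ = ⊥ ∧ L₁ ⊔ L₂ = ⊤ ∧
    ∀ x y : V → ℤ, (onesSub V).mkQ x ∈ L₁ → (onesSub V).mkQ y ∈ L₂ → gform ε x y = 0

def supportedOn {V : Type*} (A : Set V) : Submodule ℤ (V → ℤ) where
  carrier := {x | ∀ w ∉ A, x w = 0}
  add_mem' hx hy w hw := by simp [hx w hw, hy w hw]
  zero_mem' _ _ := rfl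
  smul_mem' c x hx w hw := by simp [hx w hw]

theorem Int.mul_sub_nonpos_of_abs_le_one {s : ℤ} (hs : |s| ≤ 1) (t : ℤ) : t * (s - t) ≤ 0 := by
  obtain ⟨h₁, h₂⟩ := abs_le.mp hs
  rcases lt_trichotomy t 0 with h | h | h <;> nlinarith

theorem SimpleGraph.Reachable.apply_eq {α β : Type*} {G : SimpleGraph α} {f : α → β}
    (hf : ∀ u v, G.Adj u v → f u = f v) {u v : α} (h : G.Reachable u v) : f u = f v := by
  obtain ⟨w⟩ := h
  induction w with
  | nil => rfl
  | cons h _ ih => exact (hf _ _ h).trans ih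

section Graph

variable {V : Type*} {ε : V → V → ℕ}

theorem gGraph_adj_iff (hsymm : ∀ v w, ε v w = ε w v) {v w : V} :
    (gGraph ε).Adj v w ↔ v ≠ w ∧ 0 < ε v w := by
  rw [gGraph, SimpleGraph.fromRel_adj, hsymm w v, or_self]

theorem gConnOn.apply_eq {β : Type*} {S : Set V} (hS : gConnOn ε S) {f : V → β}
    (hf : ∀ v ∈ S, ∀ w ∈ S, 0 < ε v w → f v = f w) {v w : V} (hv : v ∈ S) (hw : w ∈ S) :
    f v = f w :=
  (hS.preconnected ⟨v, hv⟩ ⟨w, hw⟩).apply_eq (f := fun s : S => f s) fun s t hst => by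
    rcases ((SimpleGraph.fromRel_adj _ _ _).mp hst).2 with h | h
    exacts [hf _ s.2 _ t.2 h, (hf _ t.2 _ s.2 h).symm]

theorem exists_cut_of_not_gConnOn {S : Set V} (hS : S.Nonempty) (h : ¬ gConnOn ε S) :
    ∃ A B : Set V, A.Nonempty ∧ B.Nonempty ∧ Disjoint A B ∧ A ∪ B = S ∧
      ∀ p ∈ A, ∀ q ∈ B, ε p q = 0 := by
  set G := SimpleGraph.fromRel fun v w : S => 0 < ε v.1 w.1
  have hG : ¬ G.Preconnected := fun hG => h ((SimpleGraph.connected_iff G).mpr ⟨hG, hS.to_subtype⟩)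
  simp only [SimpleGraph.Preconnected, not_forall] at hG
  obtain ⟨u, v, huv⟩ := hG
  set A : Set V := {w | ∃ hw : w ∈ S, G.Reachable u ⟨w, hw⟩}
  have hAS : A ⊆ S := fun w ⟨hw, _⟩ => hw
  refine ⟨A, S \ A, ⟨u, u.2, .rfl⟩, ⟨v, v.2, fun ⟨_, hv⟩ => huv hv⟩, Set.disjoint_sdiff_right,
    Set.union_sdiff_cancel hAS, fun p ⟨hp, hup⟩ q ⟨hq, hqA⟩ => ?_⟩
  by_contra hε
  have hne : p ≠ q := by rintro rfl; exact hqA ⟨hp, hup⟩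
  refine hqA ⟨hq, hup.trans (SimpleGraph.Adj.reachable ?_)⟩
  exact (SimpleGraph.fromRel_adj _ _ _).mpr ⟨fun h => hne (congrArg Subtype.val h),
    .inl (Nat.pos_of_ne_zero hε)⟩

end Graph

section Lattice

variable {V : Type*}

theorem mem_onesSub {x : V → ℤ} : x ∈ onesSub V ↔ ∃ c : ℤ, ∀ w, x w = c := by
  simp [onesSub, Submodule.mem_span_singleton, funext_iff, eq_comm]

theorem mkQ_onesSub_eq_iff {x y : V → ℤ} :
    (onesSub V).mkQ x = (onesSub V).mkQ y ↔ ∃ c : ℤ, ∀ w, x w = y w + c := by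
  simp [Submodule.Quotient.eq, mem_onesSub, sub_eq_iff_eq_add']

variable [DecidableEq V]

theorem chiF_singleton (a : V) : chiF {a} = Pi.single a 1 := by
  ext w
  simp [chiF, Pi.single_apply]

theorem abs_chiF_sub_le_one (R : Finset V) (v w : V) : |chiF R v - chiF R w| ≤ 1 := by
  unfold chiF
  split_ifs <;> simp

theorem chiF_singleton_notMem_onesSub [Nontrivial V] (a : V) : chiF {a} ∉ onesSub V := by
  obtain ⟨b, hb⟩ := exists_ne a
  intro h
  obtain ⟨c, hc⟩ := mem_onesSub.mp h
  have := (hc a).trans (hc b).symm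
  simp [chiF, hb] at this

theorem eq_top_of_forall_mkQ_chiF_mem [Finite V] {L : Submodule ℤ ((V → ℤ) ⧸ onesSub V)}
    (h : ∀ v, (onesSub V).mkQ (chiF {v}) ∈ L) : L = ⊤ := by
  rw [eq_top_iff, ← Submodule.range_mkQ, LinearMap.range_eq_map, ← (Pi.basisFun ℤ V).span_eq,
    Submodule.map_span, Submodule.span_le]
  rintro _ ⟨_, ⟨v, rfl⟩, rfl⟩
  simpa [chiF_singleton] using h v

theorem map_mkQ_supportedOn_ne_bot [Nontrivial V] {A : Set V} (hA : A.Nonempty) :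
    (supportedOn A).map (onesSub V).mkQ ≠ ⊥ := by
  obtain ⟨u, hu⟩ := hA
  refine (Submodule.ne_bot_iff _).mpr ⟨_, ⟨chiF {u}, fun w hw => ?_, rfl⟩,
    fun h => chiF_singleton_notMem_onesSub u ((Submodule.Quotient.mk_eq_zero _).mp h)⟩
  simp only [chiF, Finset.mem_singleton, ite_eq_right_iff]
  rintro rfl
  exact absurd hu hw

end Lattice

section Form

variable {V : Type*} [Fintype V] [DecidableEq V] {ε : V → V → ℕ}

theorem gform_eq_sum (hloop : ∀ v, ε v v = 0) (x y : V → ℤ) :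
    gform ε x y = ∑ v, ∑ w, (ε v w : ℤ) * (x v * (y v - y w)) := by
  have hdiag : ∀ v, ∑ w ∈ univ.filter (· ≠ v), (ε v w : ℤ) * (x v * y w) =
      ∑ w, (ε v w : ℤ) * (x v * y w) := fun v =>
    sum_subset (filter_subset _ _) fun w _ hw => by simp_all
  simp_rw [gform, hdiag, sum_mul, ← sum_sub_distrib, mul_sub]

theorem two_mul_gform (hsymm : ∀ v w, ε v w = ε w v) (hloop : ∀ v, ε v v = 0) (x y : V → ℤ) :
    2 * gform ε x y = ∑ v, ∑ w, (ε v w : ℤ) * ((x v - x w) * (y v - y w)) := by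
  have hswap : gform ε x y = ∑ v, ∑ w, (ε v w : ℤ) * (x w * (y w - y v)) := by
    rw [gform_eq_sum hloop, sum_comm]
    simp_rw [hsymm]
  rw [two_mul]
  nth_rewrite 1 [gform_eq_sum hloop]
  rw [hswap, ← sum_add_distrib]
  refine sum_congr rfl fun v _ => ?_
  rw [← sum_add_distrib]
  exact sum_congr rfl fun w _ => by ring

theorem gform_eq_of_mkQ_eq (hsymm : ∀ v w, ε v w = ε w v) (hloop : ∀ v, ε v v = 0)
    {x x' y y' : V → ℤ} (hx : (onesSub V).mkQ x = (onesSub V).mkQ x')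
    (hy : (onesSub V).mkQ y = (onesSub V).mkQ y') : gform ε x y = gform ε x' y' := by
  obtain ⟨c, hc⟩ := mkQ_onesSub_eq_iff.mp hx
  obtain ⟨d, hd⟩ := mkQ_onesSub_eq_iff.mp hy
  refine mul_left_cancel₀ (two_ne_zero (α := ℤ)) ?_
  simp only [two_mul_gform hsymm hloop, hc, hd, add_sub_add_right_eq_sub]

theorem gform_chiF_singleton (hloop : ∀ v, ε v v = 0) {a b : V} (hab : a ≠ b) :
    gform ε (chiF {a}) (chiF {b}) = -ε a b := by
  simp [gform_eq_sum hloop, chiF_singleton, Pi.single_apply, hab]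

theorem gform_eq_zero_of_forall_edge (hsymm : ∀ v w, ε v w = ε w v) (hloop : ∀ v, ε v v = 0)
    {x y : V → ℤ} (h : ∀ v w, 0 < ε v w → x v = x w ∨ y v = y w) : gform ε x y = 0 := by
  have : 2 * gform ε x y = 0 := by
    rw [two_mul_gform hsymm hloop]
    refine sum_eq_zero fun v _ => sum_eq_zero fun w _ => ?_
    rcases (ε v w).eq_zero_or_pos with h0 | hpos
    · simp [h0]
    · rcases h v w hpos with h' | h' <;> simp [h']
  omega

end Form

section Equivalence

variable {V : Type*} [Fintype V] [DecidableEq V] {ε : V → V → ℕ}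

theorem sub_eq_zero_or_eq_of_gform_sub_nonneg (hsymm : ∀ v w, ε v w = ε w v)
    (hloop : ∀ v, ε v v = 0) {x z : V → ℤ} (hz : ∀ v w, |z v - z w| ≤ 1)
    (h : 0 ≤ gform ε x (z - x)) {v w : V} (hvw : 0 < ε v w) :
    x v - x w = 0 ∨ x v - x w = z v - z w := by
  set f : V × V → ℤ := fun p =>
    ε p.1 p.2 * ((x p.1 - x p.2) * ((z p.1 - z p.2) - (x p.1 - x p.2)))
  have hf : f ≤ 0 := fun p =>
    mul_nonpos_of_nonneg_of_nonpos (by positivity) (Int.mul_sub_nonpos_of_abs_le_one (hz _ _) _)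
  have hsum : ∑ p, f p = 0 := by
    refine le_antisymm (Fintype.sum_nonpos hf) ?_
    calc 0 ≤ 2 * gform ε x (z - x) := by omega
      _ = ∑ p, f p := by
        rw [two_mul_gform hsymm hloop, ← Fintype.sum_prod_type']
        simp only [f, Pi.sub_apply, sub_sub_sub_comm]
  have hvw' := congrFun ((Fintype.sum_eq_zero_iff_of_nonpos hf).mp hsum) (v, w)
  simpa [f, hvw.ne', sub_eq_zero, eq_comm] using hvw'

theorem gIrredRep_chiF_of_gConnOn [Nontrivial V] (hsymm : ∀ v w, ε v w = ε w v)
    (hloop : ∀ v, ε v v = 0) (hconn : (gGraph ε).Connected) {a : V}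
    (ha : gConnOn ε ({a}ᶜ : Set V)) : gIrredRep ε (chiF {a}) := by
  rintro ⟨x, y, hx, hy, hxy, hpos⟩
  have hyy : (chiF {a} - x) - y ∈ onesSub V := by rwa [sub_sub]
  have hy' : chiF {a} - x ∉ onesSub V := fun h => hy (by simpa using sub_mem h hyy)
  have hpos' : 0 ≤ gform ε x (chiF {a} - x) := by
    rwa [gform_eq_of_mkQ_eq hsymm hloop rfl ((Submodule.Quotient.eq _).mpr hyy)]
  have hedge {v w : V} (hvw : 0 < ε v w) :=
    sub_eq_zero_or_eq_of_gform_sub_nonneg hsymm hloop (abs_chiF_sub_le_one _) hpos' hvw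
  obtain ⟨b, hb⟩ := exists_ne a
  have hconst {w : V} (hw : w ≠ a) : x w = x b :=
    ha.apply_eq (fun v hv u hu hvu => by
      simpa [chiF, Set.mem_compl_singleton_iff.mp hv, Set.mem_compl_singleton_iff.mp hu,
        sub_eq_zero] using hedge hvu) hw hb
  obtain ⟨q, hq⟩ := hconn.preconnected.exists_adj_of_nontrivial a
  obtain ⟨hqa, haq⟩ := (gGraph_adj_iff hsymm).mp hq
  have hxq := hconst hqa.symm
  rcases hedge haq with h | h
  · refine hx (mem_onesSub.mpr ⟨x b, fun w => ?_⟩)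
    rcases eq_or_ne w a with rfl | hw
    · omega
    · exact hconst hw
  · refine hy' (mem_onesSub.mpr ⟨-x b, fun w => ?_⟩)
    rcases eq_or_ne w a with rfl | hw
    · simp only [chiF, mem_singleton, ↓reduceIte, hqa.symm, sub_zero, Pi.sub_apply] at h ⊢
      omega
    · simp [chiF, hw, hconst hw]

theorem mkQ_mem_or_mem_of_gIrredRep {z : V → ℤ} (hz : gIrredRep ε z)
    {L₁ L₂ : Submodule ℤ ((V → ℤ) ⧸ onesSub V)} (hsup : L₁ ⊔ L₂ = ⊤)
    (horth : ∀ x y : V → ℤ, (onesSub V).mkQ x ∈ L₁ → (onesSub V).mkQ y ∈ L₂ → gform ε x y = 0) :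
    (onesSub V).mkQ z ∈ L₁ ∨ (onesSub V).mkQ z ∈ L₂ := by
  obtain ⟨p, hp, q, hq, hpq⟩ :=
    Submodule.mem_sup.mp (hsup ▸ Submodule.mem_top (x := (onesSub V).mkQ z))
  obtain ⟨x, rfl⟩ := (onesSub V).mkQ_surjective p
  obtain ⟨y, rfl⟩ := (onesSub V).mkQ_surjective q
  by_contra! h
  refine hz ⟨x, y, fun hx => h.2 ?_, fun hy => h.1 ?_, ?_, (horth x y hp hq).ge⟩
  · simpa [← hpq, (Submodule.Quotient.mk_eq_zero _).mpr hx] using hq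
  · simpa [← hpq, (Submodule.Quotient.mk_eq_zero _).mpr hy] using hp
  · exact (Submodule.Quotient.eq _).mp (hpq.symm.trans (map_add _ x y).symm)

theorem eq_zero_of_mkQ_chiF_mem (hloop : ∀ v, ε v v = 0)
    {L₁ L₂ : Submodule ℤ ((V → ℤ) ⧸ onesSub V)}
    (horth : ∀ x y : V → ℤ, (onesSub V).mkQ x ∈ L₁ → (onesSub V).mkQ y ∈ L₂ → gform ε x y = 0)
    {p q : V} (hp : (onesSub V).mkQ (chiF {p}) ∈ L₁) (hq : (onesSub V).mkQ (chiF {q}) ∈ L₂) :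
    ε p q = 0 := by
  rcases eq_or_ne p q with rfl | hpq
  · exact hloop p
  · have := horth _ _ hp hq
    rw [gform_chiF_singleton hloop hpq] at this
    omega

theorem not_isOrthogonalSplitting (hsymm : ∀ v w, ε v w = ε w v) (hloop : ∀ v, ε v v = 0)
    (hconn : (gGraph ε).Connected) (hirr : ∀ v, gIrredRep ε (chiF {v}))
    (L₁ L₂ : Submodule ℤ ((V → ℤ) ⧸ onesSub V)) : ¬ IsOrthogonalSplitting ε L₁ L₂ := by
  rintro ⟨h₁, h₂, hinf, hsup, horth⟩
  have hside (v : V) := mkQ_mem_or_mem_of_gIrredRep (hirr v) hsup horth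
  have hadj (p q : V) (hpq : (gGraph ε).Adj p q) :
      ((onesSub V).mkQ (chiF {p}) ∈ L₁) = ((onesSub V).mkQ (chiF {q}) ∈ L₁) := by
    have hε := ((gGraph_adj_iff hsymm).mp hpq).2.ne'
    refine propext ⟨fun hp => (hside q).resolve_right fun hq => ?_,
      fun hq => (hside p).resolve_right fun hp => ?_⟩
    · exact hε (eq_zero_of_mkQ_chiF_mem hloop horth hp hq)
    · exact hε (hsymm p q ▸ eq_zero_of_mkQ_chiF_mem hloop horth hq hp)
  obtain ⟨v₀⟩ := hconn.nonempty
  have hall (v : V) := (hconn.preconnected v₀ v).apply_eq hadj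
  by_cases h₀ : (onesSub V).mkQ (chiF {v₀}) ∈ L₁
  · have : L₁ = ⊤ := eq_top_of_forall_mkQ_chiF_mem fun v => hall v ▸ h₀
    exact h₂ (by simpa [this] using hinf)
  · have : L₂ = ⊤ := eq_top_of_forall_mkQ_chiF_mem fun v => (hside v).resolve_left (hall v ▸ h₀)
    exact h₁ (by simpa [this] using hinf)

end Equivalence

section Cut

variable {V : Type*}

theorem map_mkQ_supportedOn_inf_eq_bot {a : V} {A B : Set V} (hAB : Disjoint A B)
    (ha : a ∉ A ∪ B) :
    (supportedOn A).map (onesSub V).mkQ ⊓ (supportedOn B).map (onesSub V).mkQ = ⊥ := by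
  rw [eq_bot_iff]
  rintro _ ⟨⟨x, hx, rfl⟩, ⟨y, hy, hxy⟩⟩
  obtain ⟨c, hc⟩ := mkQ_onesSub_eq_iff.mp hxy
  have hc₀ : c = 0 := by
    have := hc a
    rw [hx a fun h => ha (.inl h), hy a fun h => ha (.inr h)] at this
    omega
  suffices x = 0 by rw [Submodule.mem_bot, this, map_zero]
  funext w
  by_cases hw : w ∈ A
  · have := hc w
    rw [hy w (Set.disjoint_left.mp hAB hw), hc₀] at this
    simpa using this.symm
  · exact hx w hw

theorem map_mkQ_supportedOn_sup_eq_top {a : V} {A B : Set V} (hAB : Disjoint A B)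
    (hcover : A ∪ B = {a}ᶜ) :
    (supportedOn A).map (onesSub V).mkQ ⊔ (supportedOn B).map (onesSub V).mkQ = ⊤ := by
  rw [eq_top_iff]
  rintro z -
  obtain ⟨x, rfl⟩ := (onesSub V).mkQ_surjective z
  set x₀ : V → ℤ := x - fun _ => x a
  have hsplit : x₀ = A.indicator x₀ + B.indicator x₀ := by
    have hsupp : Function.support x₀ ⊆ {a}ᶜ := fun w hw hwa =>
      hw (by rw [Set.mem_singleton_iff.mp hwa]; simp [x₀])
    have := Set.indicator_union_of_disjoint hAB x₀
    rwa [hcover, Set.indicator_eq_self.mpr hsupp] at this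
  have hx : (onesSub V).mkQ x =
      (onesSub V).mkQ (A.indicator x₀) + (onesSub V).mkQ (B.indicator x₀) := by
    rw [← map_add, ← hsplit, mkQ_onesSub_eq_iff]
    exact ⟨x a, fun w => by simp [x₀]⟩
  rw [hx]
  exact add_mem (Submodule.mem_sup_left ⟨_, fun w hw => Set.indicator_of_notMem hw _, rfl⟩)
    (Submodule.mem_sup_right ⟨_, fun w hw => Set.indicator_of_notMem hw _, rfl⟩)

variable [Fintype V] [DecidableEq V] {ε : V → V → ℕ}

theorem gform_eq_zero_of_mem_supportedOn (hsymm : ∀ v w, ε v w = ε w v)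
    (hloop : ∀ v, ε v v = 0) {A B : Set V} (hAB : Disjoint A B)
    (hcut : ∀ p ∈ A, ∀ q ∈ B, ε p q = 0) {x y : V → ℤ} (hx : x ∈ supportedOn A)
    (hy : y ∈ supportedOn B) : gform ε x y = 0 := by
  refine gform_eq_zero_of_forall_edge hsymm hloop fun p q hpq => ?_
  by_cases h : p ∈ A ∨ q ∈ A
  · right
    have hB : p ∉ B ∧ q ∉ B := by
      rcases h with hp | hq
      · exact ⟨Set.disjoint_left.mp hAB hp, fun hq => hpq.ne' (hcut p hp q hq)⟩
      · exact ⟨fun hp => hpq.ne' (hsymm p q ▸ hcut q hq p hp), Set.disjoint_left.mp hAB hq⟩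
    rw [hy p hB.1, hy q hB.2]
  · left
    push Not at h
    rw [hx p h.1, hx q h.2]

theorem exists_isOrthogonalSplitting_of_not_gConnOn [Nontrivial V]
    (hsymm : ∀ v w, ε v w = ε w v) (hloop : ∀ v, ε v v = 0) {a : V}
    (ha : ¬ gConnOn ε ({a}ᶜ : Set V)) : ∃ L₁ L₂, IsOrthogonalSplitting ε L₁ L₂ := by
  obtain ⟨A, B, hA, hB, hAB, hcover, hcut⟩ :=
    exists_cut_of_not_gConnOn (Set.nonempty_compl_of_nontrivial a) ha
  refine ⟨_, _, map_mkQ_supportedOn_ne_bot hA, map_mkQ_supportedOn_ne_bot hB,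
    map_mkQ_supportedOn_inf_eq_bot (a := a) hAB (by simp [hcover]),
    map_mkQ_supportedOn_sup_eq_top hAB hcover, ?_⟩
  rintro x y ⟨x₀, hx₀, hxx⟩ ⟨y₀, hy₀, hyy⟩
  rw [← gform_eq_of_mkQ_eq hsymm hloop hxx hyy]
  exact gform_eq_zero_of_mem_supportedOn hsymm hloop hAB hcut hx₀ hy₀

end Cut

/-- Lemma 3.3 of the paper: for a connected multigraph `G`, the following are
equivalent: (i) `G` is 2-connected; (ii) every vertex class is irreducible in
the graph lattice `Λ(G) = ℤ^V/ℤ[V]`; (iii) `Λ(G)` is indecomposable. -/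
theorem stmt_5 {V : Type*} [Fintype V] [DecidableEq V] (ε : V → V → ℕ)
    (hcard : 2 ≤ Fintype.card V)
    (hsymm : ∀ v w, ε v w = ε w v) (hloop : ∀ v, ε v v = 0)
    (hconn : (gGraph ε).Connected) :
    ((∀ v : V, gConnOn ε ({v}ᶜ : Set V)) ↔ (∀ v : V, gIrredRep ε (chiF {v}))) ∧
    ((∀ v : V, gIrredRep ε (chiF {v})) ↔
      ¬ ∃ (L₁ L₂ : Submodule ℤ ((V → ℤ) ⧸ onesSub V)),
        L₁ ≠ ⊥ ∧ L₂ ≠ ⊥ ∧ L₁ ⊓ L₂ = ⊥ ∧ L₁ ⊔ L₂ = ⊤ ∧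
          ∀ x y : V → ℤ, (onesSub V).mkQ x ∈ L₁ → (onesSub V).mkQ y ∈ L₂ →
            gform ε x y = 0) := by
  have : Nontrivial V := Fintype.one_lt_card_iff_nontrivial.mp hcard
  have h12 : (∀ v : V, gConnOn ε ({v}ᶜ : Set V)) → ∀ v : V, gIrredRep ε (chiF {v}) :=
    fun h v => gIrredRep_chiF_of_gConnOn hsymm hloop hconn (h v)
  have h23 : (∀ v : V, gIrredRep ε (chiF {v})) → ¬ ∃ L₁ L₂, IsOrthogonalSplitting ε L₁ L₂ :=
    fun h ⟨L₁, L₂, hL⟩ => not_isOrthogonalSplitting hsymm hloop hconn h L₁ L₂ hL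
  have h31 : (¬ ∃ L₁ L₂, IsOrthogonalSplitting ε L₁ L₂) → ∀ v : V, gConnOn ε ({v}ᶜ : Set V) :=
    fun h v => by_contra fun hv => h (exists_isOrthogonalSplitting_of_not_gConnOn hsymm hloop hv)
  exact ⟨⟨h12, fun h => h31 (h23 h)⟩, h23, fun h => h12 (h31 h)⟩
end

section
/- Let L be a p/q-changemaker lattice with p > q ≥ 2, and suppose σ_i ≥ 1 for all 1 ≤ i ≤ t. Let 1 ≤ k ≤ t, let A ⊆ {1, …, k−1} and B ⊆ {0, …, s}, and suppose the vector z = −f_k + Σ_{i∈A} f_i + Σ_{j∈B} e_j lies in L. Then z is irreducible in L. -/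
/-- The negative continued fraction `[b_0, …, b_n]⁻ = b_0 - 1/[b_1, …, b_n]⁻`. -/
def cfMinus : List ℚ → ℚ
  | [] => 0
  | [b] => b
  | b :: c :: rest => b - 1 / cfMinus (c :: rest)

/-- The standard inner product on `ℤ^ι`. -/
def dot {ι : Type*} [Fintype ι] (x y : ι → ℤ) : ℤ := ∑ i, x i * y i

/-- The basis vector `f_i` (indices shifted: `fvec t s i` is `f_{i+1}`). -/
def fvec (t s : ℕ) (i : Fin t) : Fin t ⊕ Fin (s + 1) → ℤ := Pi.single (Sum.inl i) 1

/-- The basis vector `e_j`, `0 ≤ j ≤ s`. -/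
def evec (t s : ℕ) (j : Fin (s + 1)) : Fin t ⊕ Fin (s + 1) → ℤ := Pi.single (Sum.inr j) 1

/-- The changemaker vector `w_0 = e_0 + σ_1 f_1 + ⋯ + σ_t f_t`. -/
def w0 (t s : ℕ) (σ : Fin t → ℤ) : Fin t ⊕ Fin (s + 1) → ℤ :=
  Sum.elim σ fun j => if (j : ℕ) = 0 then 1 else 0

/-- The vector `w_k = -e_{m_{k-1}} + e_{m_{k-1}+1} + ⋯ + e_{m_k}` for `k ≥ 1`. -/
def wk (t s : ℕ) (m : ℕ → ℕ) (k : ℕ) : Fin t ⊕ Fin (s + 1) → ℤ :=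
  Sum.elim 0 fun j =>
    if (j : ℕ) = m (k - 1) then -1
    else if m (k - 1) < (j : ℕ) ∧ (j : ℕ) ≤ m k then 1 else 0

/-- The vectors `w_0, w_1, …, w_l`. -/
def wvec (t s : ℕ) (σ : Fin t → ℤ) (m : ℕ → ℕ) (k : ℕ) : Fin t ⊕ Fin (s + 1) → ℤ :=
  if k = 0 then w0 t s σ else wk t s m k

/-- The `p/q`-changemaker lattice `L = ⟨w_0, …, w_l⟩^⊥ ⊆ ℤ^{t+s+1}`. -/
def Lset (t s l : ℕ) (σ : Fin t → ℤ) (m : ℕ → ℕ) : Set (Fin t ⊕ Fin (s + 1) → ℤ) :=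
  {x | ∀ k ≤ l, dot x (wvec t s σ m k) = 0}

/-- The fractional part `L_F = ⟨w_1, …, w_l⟩^⊥ ∩ ⟨e_0, …, e_s⟩`. -/
def LFset (t s l : ℕ) (m : ℕ → ℕ) : Set (Fin t ⊕ Fin (s + 1) → ℤ) :=
  {x | (∀ i, x (Sum.inl i) = 0) ∧ ∀ k, 1 ≤ k → k ≤ l → dot x (wk t s m k) = 0}

/-- The index set `M = {0, 1, …, s} ∖ {m_0, m_1, …, m_l}`. -/
def Mset (s l : ℕ) (m : ℕ → ℕ) : Finset ℕ :=
  (Finset.range (s + 1)).filter fun j => ∀ k ≤ l, j ≠ m k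

/-- The least element of `M` (equal to `s` if `M = ∅`). -/
def minM (s l : ℕ) (m : ℕ → ℕ) : ℕ :=
  if h : (Mset s l m).Nonempty then (Mset s l m).min' h else s

/-- For `k ∈ M`, the least element `k'` of `M` greater than `k`; equal to `s`
if no such element exists. -/
def nxt (s l : ℕ) (m : ℕ → ℕ) (k : ℕ) : ℕ :=
  if h : ((Mset s l m).filter fun j => k < j).Nonempty then
    ((Mset s l m).filter fun j => k < j).min' h
  else s

/-- `v_0 = e_0 + e_1 + ⋯ + e_{min M}` (equal to `e_0 + ⋯ + e_s` if `M = ∅`). -/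
def v0vec (t s l : ℕ) (m : ℕ → ℕ) : Fin t ⊕ Fin (s + 1) → ℤ :=
  Sum.elim 0 fun j => if (j : ℕ) ≤ minM s l m then 1 else 0

/-- `v'_k = -e_k + e_{k+1} + ⋯ + e_{k'}` for `k ∈ M`. -/
def vKvec (t s l : ℕ) (m : ℕ → ℕ) (k : ℕ) : Fin t ⊕ Fin (s + 1) → ℤ :=
  Sum.elim 0 fun j =>
    if (j : ℕ) = k then -1
    else if k < (j : ℕ) ∧ (j : ℕ) ≤ nxt s l m k then 1 else 0

/-- The sequence `v_0, v_1, …, v_m` (`m = |M|`): `v_0` as above, and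
`v_1, …, v_m` are the vectors `v'_k`, `k ∈ M`, in increasing order of `k`. -/
def vSeq (t s l : ℕ) (m : ℕ → ℕ) (i : ℕ) : Fin t ⊕ Fin (s + 1) → ℤ :=
  if i = 0 then v0vec t s l m
  else vKvec t s l m (((Mset s l m).sort (· ≤ ·)).getD (i - 1) 0)

/-- `x_F = Σ_{j=0}^s (x·e_j) e_j`, the projection to the span of the `e_j`. -/
def Fpart (t s : ℕ) (x : Fin t ⊕ Fin (s + 1) → ℤ) : Fin t ⊕ Fin (s + 1) → ℤ :=
  ∑ j, dot x (evec t s j) • evec t s j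

/-- `z` is irreducible in the lattice `S`: there are no nonzero `x, y ∈ S`
with `z = x + y` and `x·y ≥ 0`. -/
def IrredIn {ι : Type*} [Fintype ι] (S : Set (ι → ℤ)) (z : ι → ℤ) : Prop :=
  ¬ ∃ x y : ι → ℤ, x ∈ S ∧ y ∈ S ∧ x ≠ 0 ∧ y ≠ 0 ∧ z = x + y ∧ 0 ≤ dot x y

/-- The data `(t, s, l, a, m, σ)` presents the `p/q`-changemaker lattice
`⟨w_0, …, w_l⟩^⊥ ⊆ ℤ^{t+s+1}`, where `p/q = n − r/q = [a_0, a_1, …, a_l]⁻` with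
`a_0 = n`, `a_k ≥ 2` for `1 ≤ k ≤ l`; `m_0 = 0`, `m_k = a_1 + ⋯ + a_k − k`,
`s = m_l`; and `(σ_1, …, σ_t)` is a nondecreasing tuple of nonnegative integers
satisfying the changemaker condition with `w_0·w_0 = 1 + Σ σ_i² = n`. -/
structure IsCMLattice (p q n r : ℤ) (t s l : ℕ) (a : ℕ → ℤ) (m : ℕ → ℕ)
    (σ : Fin t → ℤ) : Prop where
  hq2 : 2 ≤ q
  hqp : q < p
  hgcd : Int.gcd p q = 1
  hp : p = n * q - r
  hr0 : 0 < r
  hrq : r < q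
  ha0 : a 0 = n
  hak : ∀ k, 1 ≤ k → k ≤ l → 2 ≤ a k
  hcf : cfMinus ((List.range (l + 1)).map fun i => (a i : ℚ)) = (p : ℚ) / (q : ℚ)
  hm0 : m 0 = 0
  hmrec : ∀ k, 1 ≤ k → k ≤ l → (m k : ℤ) = (m (k - 1) : ℤ) + a k - 1
  hs : s = m l
  hσ0 : ∀ i, 0 ≤ σ i
  hσmono : Monotone σ
  hσcm : ∀ i : Fin t, σ i ≤ (∑ j ∈ Finset.univ.filter (· < i), σ j) + 1
  hσn : 1 + ∑ i, σ i ^ 2 = n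
open Finset

theorem mul_nonpos_of_abs_add_le_one {a b : ℤ} (h : |a + b| ≤ 1) : a * b ≤ 0 := by
  by_contra! hab
  rw [abs_le] at h
  rcases mul_pos_iff.mp hab with ⟨ha, hb⟩ | ⟨ha, hb⟩ <;> omega

theorem mul_eq_zero_of_dot_eq_zero {ι : Type*} [Fintype ι] {x y : ι → ℤ}
    (hnn : ∀ u, 0 ≤ x u * y u) (h : dot x y = 0) (u : ι) : x u * y u = 0 :=
  (sum_eq_zero_iff_of_nonneg fun u _ => hnn u).mp h u (mem_univ u)

theorem nonneg_of_mul_eq_zero {ι : Type*} {x y : ι → ℤ} (u₀ : ι) (hxy : ∀ u, x u * y u = 0)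
    (hx₀ : x u₀ = 0) (hsum : ∀ u ≠ u₀, 0 ≤ x u + y u) : 0 ≤ x := by
  intro u
  by_cases hu : u = u₀
  · subst hu
    exact hx₀.ge
  · rcases mul_eq_zero.mp (hxy u) with hx | hy
    · exact hx.ge
    · simpa [hy] using hsum u hu

/-- Writing `z = x + y` with `x·y ≥ 0` forces `x` and `y` to have disjoint supports, since
`|z_u| ≤ 1`; the summand vanishing at the only possibly negative coordinate `u₀` is then
nonnegative. -/
theorem irredIn_of_abs_le_one {ι : Type*} [Fintype ι] {S : Set (ι → ℤ)} {z : ι → ℤ} (u₀ : ι)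
    (hS : ∀ w ∈ S, 0 ≤ w → w = 0) (hz : ∀ u, |z u| ≤ 1) (hz₀ : ∀ u ≠ u₀, 0 ≤ z u) :
    IrredIn S z := by
  rintro ⟨x, y, hx, hy, hx0, hy0, rfl, hxy⟩
  have hle : ∀ u ∈ univ, x u * y u ≤ 0 := fun u _ => mul_nonpos_of_abs_add_le_one (hz u)
  have hdisj : ∀ u, x u * y u = 0 := fun u =>
    (sum_eq_zero_iff_of_nonpos hle).mp (le_antisymm (sum_nonpos hle) hxy) u (mem_univ u)
  rcases mul_eq_zero.mp (hdisj u₀) with hx₀ | hy₀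
  · exact hx0 (hS x hx (nonneg_of_mul_eq_zero u₀ hdisj hx₀ hz₀))
  · refine hy0 (hS y hy (nonneg_of_mul_eq_zero (y := x) u₀ (fun u => ?_) hy₀ fun u hu => ?_))
    · rw [mul_comm]; exact hdisj u
    · rw [add_comm]; exact hz₀ u hu

section Lattice

variable {t s l : ℕ} {σ : Fin t → ℤ} {m : ℕ → ℕ}

/-- A nonnegative vector orthogonal to `w_0` vanishes on `f_1, …, f_t, e_0`, and then
orthogonality to `w_1, …, w_l` propagates the vanishing along `e_0, …, e_{m_l}`: the only
negative entry of `w_c` sits at `e_{m_{c-1}}`, where the vector already vanishes. -/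
theorem eq_zero_of_nonneg_of_mem_Lset (hσ : ∀ i, 1 ≤ σ i) (hm0 : m 0 = 0) (hs : s = m l)
    {w : Fin t ⊕ Fin (s + 1) → ℤ} (hwL : w ∈ Lset t s l σ m) (hw : 0 ≤ w) : w = 0 := by
  have hw0 : ∀ u, w u * w0 t s σ u = 0 := by
    refine mul_eq_zero_of_dot_eq_zero (fun u => mul_nonneg (hw u) ?_) (hwL 0 l.zero_le)
    rcases u with i | j
    · exact zero_le_one.trans (hσ i)
    · simp only [w0, Sum.elim_inr]; split_ifs <;> norm_num
  have hf : ∀ i, w (Sum.inl i) = 0 := fun i =>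
    (mul_eq_zero.mp (hw0 (Sum.inl i))).resolve_right (zero_lt_one.trans_le (hσ i)).ne'
  have he : ∀ c ≤ l, ∀ j : Fin (s + 1), (j : ℕ) ≤ m c → w (Sum.inr j) = 0 := by
    intro c
    induction c with
    | zero =>
      intro _ j hj
      have hj0 : j = 0 := Fin.ext (by simp only [Fin.val_zero]; omega)
      simpa [w0, hj0] using hw0 (Sum.inr j)
    | succ c ih =>
      intro hc j hj
      rcases le_or_gt (j : ℕ) (m c) with hle | hlt
      · exact ih (by omega) j hle
      have hwk : ∀ u, w u * wk t s m (c + 1) u = 0 := by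
        refine mul_eq_zero_of_dot_eq_zero (fun u => ?_) (hwL (c + 1) hc)
        rcases u with i | j'
        · simp [wk]
        · simp only [wk, Sum.elim_inr, Nat.add_sub_cancel]
          split_ifs with h1 h2
          · rw [ih (by omega) j' h1.le, zero_mul]
          · simpa using hw (Sum.inr j')
          · simp
      have hne : (j : ℕ) ≠ m c := hlt.ne'
      simpa [wk, hne, hlt, hj] using hwk (Sum.inr j)
  funext u
  rcases u with i | j
  · exact hf i
  · exact he l le_rfl j (by omega)

end Lattice

theorem stmt_8_general (p q n r : ℤ) (t s l : ℕ) (a : ℕ → ℤ) (m : ℕ → ℕ) (σ : Fin t → ℤ)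
    (h : IsCMLattice p q n r t s l a m σ) (hσ1 : ∀ i, 1 ≤ σ i)
    (k : Fin t) (A : Finset (Fin t)) (B : Finset (Fin (s + 1)))
    (z : Fin t ⊕ Fin (s + 1) → ℤ)
    (hz : z = -fvec t s k + (∑ i ∈ A, fvec t s i) + ∑ j ∈ B, evec t s j) :
    IrredIn (Lset t s l σ m) z := by
  have hzf : ∀ i, z (Sum.inl i) = (if i ∈ A then 1 else 0) - (if i = k then 1 else 0) := by
    intro i
    simp [hz, fvec, evec, Pi.single_apply, sub_eq_neg_add, add_comm]
  have hze : ∀ j, z (Sum.inr j) = if j ∈ B then 1 else 0 := by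
    intro j
    simp [hz, fvec, evec, Pi.single_apply]
  refine irredIn_of_abs_le_one (Sum.inl k)
    (fun w hwL hw => eq_zero_of_nonneg_of_mem_Lset hσ1 h.hm0 h.hs hwL hw) ?_ ?_
  · rintro (i | j)
    · rw [hzf, abs_le]; split_ifs <;> norm_num
    · rw [hze, abs_le]; split_ifs <;> norm_num
  · rintro (i | j) hu
    · rw [hzf, if_neg (fun hik => hu (congrArg Sum.inl hik))]; split_ifs <;> norm_num
    · rw [hze]; split_ifs <;> norm_num

/-- Lemma 6.5 of the paper: if `σ_i ≥ 1` for all `i`, then any vector of the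
form `z = -f_k + Σ_{i∈A} f_i + Σ_{j∈B} e_j ∈ L`, with `A ⊆ {1, …, k-1}` and
`B ⊆ {0, …, s}`, is irreducible in `L`. -/
theorem stmt_8 (p q n r : ℤ) (t s l : ℕ) (a : ℕ → ℤ) (m : ℕ → ℕ) (σ : Fin t → ℤ)
    (h : IsCMLattice p q n r t s l a m σ) (hσ1 : ∀ i, 1 ≤ σ i)
    (k : Fin t) (A : Finset (Fin t)) (hA : ∀ i ∈ A, i < k) (B : Finset (Fin (s + 1)))
    (z : Fin t ⊕ Fin (s + 1) → ℤ)
    (hz : z = -fvec t s k + (∑ i ∈ A, fvec t s i) + ∑ j ∈ B, evec t s j)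
    (hzL : z ∈ Lset t s l σ m) :
    IrredIn (Lset t s l σ m) z :=
  stmt_8_general p q n r t s l a m σ h hσ1 k A B z hz
end
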